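/- Let n ≥ 2, let (G, ·) be a group, θ an automorphism of G, and b ∈ G such that θ(b) = b and θ^{n-1}(x) = b · x · b⁻¹ for all x ∈ G. Define f : Gⁿ → G by f(x₁, …, xₙ) = x₁ · θ(x₂) · θ²(x₃) ⋯ θ^{n-1}(xₙ) · b. Then (G, f) is an n-ary group: f is associative, i.e. for all 1 ≤ i < j ≤ n and all x₁, …, x_{2n-1} ∈ G, f(x₁, …, x_{i-1}, f(x_i, …, x_{n+i-1}), x_{n+i}, …, x_{2n-1}) = f(x₁, …, x_{j-1}, f(x_j, …, x_{n+j-1}), x_{n+j}, …, x_{2n-1}); and for all a₁, …, aₙ, c ∈ G and every 1 ≤ i ≤ n there exists a unique x ∈ G with f(a₁, …, a_{i-1}, x, a_{i+1}, …, aₙ) = c. -/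
import Mathlib

lemma ofFn_split {α : Type*} {n : ℕ} (g : Fin n → α) (i : ℕ) (hi : i < n) :
    List.ofFn g = (List.ofFn fun k : Fin i => g ⟨k, k.2.trans hi⟩) ++
      g ⟨i, hi⟩ :: List.ofFn fun k : Fin (n - i - 1) => g ⟨i + 1 + k, by omega⟩ := by
  apply List.ext_getElem
  · simp; omega
  · intro m h1 h2
    rcases lt_trichotomy m i with h | h | h
    · rw [List.getElem_append_left (by simpa using h)]
      simp
    · subst h
      rw [List.getElem_append_right (by simp)]
      simp
    · rw [List.getElem_append_right (by simp; omega)]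
      simp only [List.length_ofFn, List.getElem_cons]
      rw [dif_neg (by omega)]
      simp only [List.getElem_ofFn]
      congr 1
      simp [Fin.mk_eq_mk]
      omega



/-- Associativity of an `n`-ary operation `f`:  for all positions `i < j < n` (0-indexed)
and every sequence `x₀, …, x_{2n-2}`, collapsing the block of `n` consecutive entries
starting at position `i` by `f` gives the same result as collapsing the block starting
at position `j`. -/
def PolyAssoc {G : Type*} (n : ℕ) (f : (Fin n → G) → G) : Prop :=
  ∀ i j : ℕ, i < j → j < n → ∀ x : ℕ → G,
    f (fun k : Fin n =>
        if (k : ℕ) < i then x k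
        else if (k : ℕ) = i then f (fun l : Fin n => x (i + l))
        else x ((k : ℕ) + n - 1)) =
    f (fun k : Fin n =>
        if (k : ℕ) < j then x k
        else if (k : ℕ) = j then f (fun l : Fin n => x (j + l))
        else x ((k : ℕ) + n - 1))

/-- Unique solvability of the `n`-ary operation `f` in each position: for every position
`i`, fixed entries `a`, and right-hand side `c`, there is a unique `x` with
`f (a₁, …, a_{i-1}, x, a_{i+1}, …, aₙ) = c`. -/
def PolyUnique {G : Type*} (n : ℕ) (f : (Fin n → G) → G) : Prop :=
  ∀ (i : Fin n) (a : Fin n → G) (c : G), ∃! x : G, f (Function.update a i x) = c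

/-- Let `n ≥ 2`, let `(G, ·)` be a group, `θ` an automorphism of `G` and
`b ∈ G` with `θ b = b` and `θ^(n-1) x = b * x * b⁻¹` for all `x`.  Then the derived
`n`-ary operation `f (x₁, …, xₙ) = x₁ * θ x₂ * θ² x₃ * ⋯ * θ^(n-1) xₙ * b` makes
`(G, f)` an `n`-ary group: `f` is associative and every equation
`f (a₁, …, a_{i-1}, x, a_{i+1}, …, aₙ) = c` has a unique solution `x`. -/
theorem derived_is_polyadic_group {G : Type*} [Group G] (n : ℕ) (hn : 2 ≤ n)
    (θ : MulAut G) (b : G) (hb : θ b = b)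
    (hconj : ∀ x : G, (θ ^ (n - 1)) x = b * x * b⁻¹)
    (f : (Fin n → G) → G)
    (hf : ∀ x : Fin n → G, f x = (List.ofFn fun i : Fin n => (θ ^ (i : ℕ)) (x i)).prod * b) :
    PolyAssoc n f ∧ PolyUnique n f := by
  have hbpow : ∀ m : ℕ, (θ ^ m) b = b := by
    intro m
    induction m with
    | zero => rfl
    | succ k ih => rw [pow_succ, MulAut.mul_apply, hb, ih]
  have hcomm : ∀ a : G, b * a = (θ ^ (n-1)) a * b := by
    intro a; rw [hconj]; group
  have hpush : ∀ l : List G, b * l.prod = (l.map ⇑(θ ^ (n-1))).prod * b := by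
    intro l
    induction l with
    | nil => simp
    | cons a l ih => rw [List.prod_cons, ← mul_assoc, hcomm, mul_assoc, ih,
        List.map_cons, List.prod_cons]; group
  have main : ∀ i : ℕ, i < n → ∀ x : ℕ → G,
      f (fun k : Fin n =>
        if (k : ℕ) < i then x k
        else if (k : ℕ) = i then f (fun l : Fin n => x (i + l))
        else x ((k : ℕ) + n - 1)) =
      (List.ofFn fun m : Fin (2*n-1) => (θ ^ (m : ℕ)) (x m)).prod * b * b := by
    intro i hi x
    have h1 : ∀ k : ℕ, (i+1+k < i) = False := fun k => by simp; omega
    have h2 : ∀ k : ℕ, ((i+1+k) = i) = False := fun k => by simp; omega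
    rw [hf, ofFn_split (fun k : Fin n => (θ ^ (k:ℕ)) (if (k : ℕ) < i then x k
        else if (k : ℕ) = i then f (fun l : Fin n => x (i + l))
        else x ((k : ℕ) + n - 1))) i hi]
    simp only [Fin.is_lt, if_true, lt_self_iff_false, if_false, h1, h2, Fin.val_mk,
      ite_true, ite_false]
    have mid : (θ ^ i) (f fun l : Fin n => x (i + (l:ℕ))) =
        (List.ofFn fun l : Fin n => (θ ^ (i + (l:ℕ))) (x (i + l))).prod * b := by
      rw [hf, map_mul, hbpow, map_list_prod, List.map_ofFn]
      have : (⇑(θ ^ i) ∘ fun l : Fin n => (θ ^ (l:ℕ)) (x (i + (l:ℕ)))) =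
          fun l : Fin n => (θ ^ (i + (l:ℕ))) (x (i + (l:ℕ))) := by
        funext l
        simp [Function.comp, ← MulAut.mul_apply, ← pow_add]
      rw [this]
    rw [mid]
    have hR : (List.ofFn fun m : Fin (2*n-1) => (θ ^ (m:ℕ)) (x m)) =
        (List.ofFn fun k : Fin i => (θ ^ (k:ℕ)) (x k)) ++
        ((List.ofFn fun l : Fin n => (θ ^ (i + (l:ℕ))) (x (i + l))) ++
         (List.ofFn fun k : Fin (n-i-1) =>
            (θ ^ (i + 1 + (k:ℕ))) (x (i + 1 + k + n - 1))).map ⇑(θ ^ (n-1))) := by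
      apply List.ext_getElem
      · simp; omega
      · intro m hm1 hm2
        rcases lt_or_ge m i with h | h
        · rw [List.getElem_append_left (by simpa using h)]
          simp
        · rw [List.getElem_append_right (by simp; omega)]
          by_cases h' : m - i < n
          · rw [List.getElem_append_left (by simpa using h')]
            simp only [List.getElem_ofFn, List.length_ofFn, Fin.val_mk]
            have : i + (m - i) = m := by omega
            rw [this]
          · rw [List.getElem_append_right (by simp; omega)]
            simp only [List.getElem_map, List.getElem_ofFn, List.length_ofFn, Fin.val_mk]
            rw [← MulAut.mul_apply, ← pow_add]
            have e1 : n - 1 + (i + 1 + (m - i - n)) = m := by omega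
            have e2 : i + 1 + (m - i - n) + n - 1 = m := by omega
            rw [e1, e2]
    rw [hR, List.prod_append, List.prod_cons, List.prod_append, List.prod_append]
    rw [mul_assoc ((List.ofFn fun l : Fin n => (θ ^ (i + (l:ℕ))) (x (i + l))).prod) b, hpush]
    group
  constructor
  · intro i j hij hjn x
    rw [main i (hij.trans hjn) x, main j hjn x]
  · intro i a c
    have h1 : ∀ k : Fin (i:ℕ), ((k:ℕ) = (i:ℕ)) = False := fun k => by
      simp only [eq_iff_iff, iff_false]; omega
    have h2 : ∀ k : ℕ, (((i:ℕ)+1+k) = (i:ℕ)) = False := fun k => by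
      simp only [eq_iff_iff, iff_false]; omega
    have key : ∀ y : G,
        f (Function.update a i y) =
        (List.ofFn fun k : Fin (i:ℕ) =>
            (θ ^ (k:ℕ)) (a ⟨k, k.2.trans i.isLt⟩)).prod *
          ((θ ^ (i:ℕ)) y *
           ((List.ofFn fun k : Fin (n-(i:ℕ)-1) =>
              (θ ^ ((i:ℕ)+1+(k:ℕ))) (a ⟨(i:ℕ)+1+k, by omega⟩)).prod * b)) := by
      intro y
      rw [hf, ofFn_split (fun k : Fin n => (θ ^ (k:ℕ)) (Function.update a i y k)) (i:ℕ) i.isLt,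
        List.prod_append, List.prod_cons]
      simp only [Function.update_apply, Fin.ext_iff, Fin.val_mk, h1, h2, if_false,
        ite_false, if_true, ite_true]
      group
    simp only [key]
    have hbij : Function.Bijective
        (fun y : G =>
          (List.ofFn fun k : Fin (i:ℕ) =>
            (θ ^ (k:ℕ)) (a ⟨k, k.2.trans i.isLt⟩)).prod *
          ((θ ^ (i:ℕ)) y *
           ((List.ofFn fun k : Fin (n-(i:ℕ)-1) =>
              (θ ^ ((i:ℕ)+1+(k:ℕ))) (a ⟨(i:ℕ)+1+k, by omega⟩)).prod * b))) :=
      (Equiv.mulLeft _).bijective.comp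
        ((Equiv.mulRight _).bijective.comp (θ ^ (i:ℕ)).bijective)
    exact hbij.existsUnique c
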